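/- arXiv:2310.05298 — 4 statements merged into one kernel-verified Lean document; each statement's English description precedes it below -/
import Mathlib

section
/- Let f : ℝ → ℝ be sqrt-bounded, i.e., there exist constants M₀ ≥ 1 and M* ≥ 1 such that f(m) ≥ 1 for all m ≥ 1, f(m) ≤ √m for all m ≥ M₀, and f(m) ≤ M* for all m ∈ [1, M₀]. Let c > 0 and let T : ℝ → ℝ be a nonnegative function that is bounded on [0, 8) and satisfies T(m) ≤ c · (log m / log 2) · f(m) + (f(m) + 1) · T(m / (f(m) + 1)) for all m ≥ 8. Then there exists a constant C > 0 such that T(m) ≤ C · m for all m ≥ 1. -/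
/-!
For `m ≥ 1` we prove the stronger bound `T m ≤ C m - A m^(3/4)` by induction on `m`, the
recursive call `m / g` with `g = f m + 1 ≥ 2` being at most `m / 2`. Since `g · (m/g)^(3/4)
= g^(1/4) m^(3/4) ≥ 2^(1/4) m^(3/4)`, unrolling one level of the recurrence frees a slack of
`A (2^(1/4) - 1) m^(3/4)`, which absorbs the toll `c log₂ m · f m ≤ c log₂ m · M* √m = O(m^(3/4))`
once `A` is large. When `m / g < 1` the bound `g ≤ 2 M* √m` forces `m < 4 M*²`, so `T m` is
bounded there.
-/

open Real Set

theorem forall_one_le_of_halving_step {P : ℝ → Prop}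
    (h : ∀ m, 1 ≤ m → (∀ m', 1 ≤ m' → m' ≤ m / 2 → P m') → P m) :
    ∀ m, 1 ≤ m → P m := by
  have below_pow : ∀ n : ℕ, ∀ m, 1 ≤ m → m < 2 ^ n → P m := by
    intro n
    induction n with
    | zero => intro m hm hlt; norm_num at hlt; linarith
    | succ n ih =>
      intro m hm hlt
      rw [pow_succ] at hlt
      exact h m hm fun m' hm' hle => ih m' hm' (by linarith)
  intro m hm
  obtain ⟨n, hn⟩ := pow_unbounded_of_one_lt m (by norm_num : (1 : ℝ) < 2)
  exact below_pow n m hm hn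

theorem mul_div_rpow_eq {g m : ℝ} (p : ℝ) (hg : 0 < g) (hm : 0 ≤ m) :
    g * (m / g) ^ p = g ^ (1 - p) * m ^ p := by
  rw [div_rpow hm hg.le, rpow_sub hg, rpow_one]
  field_simp

theorem log_mul_sqrt_le {m : ℝ} (hm : 0 ≤ m) : log m * √m ≤ 4 * m ^ (3 / 4 : ℝ) := by
  have hlog : log m ≤ 4 * m ^ (1 / 4 : ℝ) := by
    have := log_le_rpow_div hm (by norm_num : (0 : ℝ) < 1 / 4)
    linarith
  calc log m * √m ≤ 4 * m ^ (1 / 4 : ℝ) * m ^ (1 / 2 : ℝ) := by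
        rw [sqrt_eq_rpow]; gcongr
    _ = 4 * m ^ (3 / 4 : ℝ) := by
        rw [mul_assoc, ← rpow_add' hm (by norm_num)]; norm_num

theorem le_mul_sqrt_of_sqrt_bounded {f : ℝ → ℝ} {M₀ S : ℝ} (hS : 1 ≤ S)
    (hf_sqrt : ∀ m, M₀ ≤ m → f m ≤ √m) (hf_init : ∀ m ∈ Icc 1 M₀, f m ≤ S)
    {m : ℝ} (hm : 1 ≤ m) : f m ≤ S * √m := by
  have hsqrt : 1 ≤ √m := one_le_sqrt.mpr hm
  rcases le_or_gt m M₀ with h | h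
  · nlinarith [hf_init m ⟨hm, h⟩]
  · nlinarith [hf_sqrt m h.le]

theorem mul_log_div_log_two_mul_le {c S F m : ℝ} (hc : 0 ≤ c) (hS : 0 ≤ S) (hm : 1 ≤ m)
    (hF : F ≤ S * √m) :
    c * (log m / log 2) * F ≤ 4 * c * S / log 2 * m ^ (3 / 4 : ℝ) := by
  have hlog : 0 ≤ log m := log_nonneg hm
  calc c * (log m / log 2) * F ≤ c * (log m / log 2) * (S * √m) := by gcongr
    _ = c * S / log 2 * (log m * √m) := by ring
    _ ≤ c * S / log 2 * (4 * m ^ (3 / 4 : ℝ)) :=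
        mul_le_mul_of_nonneg_left (log_mul_sqrt_le (by linarith))
          (div_nonneg (mul_nonneg hc hS) (log_nonneg one_le_two))
    _ = 4 * c * S / log 2 * m ^ (3 / 4 : ℝ) := by ring

section Recurrence

variable {T a g : ℝ → ℝ} {m₀ K G α p : ℝ}

theorem le_mul_sub_rpow_of_le_add_mul {A C : ℝ} (hp : p < 1) (hm₀ : 1 ≤ m₀) (hK₀ : 0 ≤ K)
    (hα : 0 ≤ α) (hK : ∀ m ∈ Ico 0 m₀, T m ≤ K)
    (hg₂ : ∀ m, m₀ ≤ m → 2 ≤ g m) (hgG : ∀ m, m₀ ≤ m → g m ≤ G * √m)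
    (ha : ∀ m, m₀ ≤ m → a m ≤ α * m ^ p)
    (hrec : ∀ m, m₀ ≤ m → T m ≤ a m + g m * T (m / g m))
    (hA : α ≤ A * (2 ^ (1 - p) - 1)) (hCK : K ≤ C - A) (hCG : G ^ 2 * (α + K) ≤ C - A) :
    ∀ m, 1 ≤ m → T m ≤ C * m - A * m ^ p := by
  have hδ : 1 < (2 : ℝ) ^ (1 - p) := one_lt_rpow (by norm_num) (by linarith)
  have hA₀ : 0 ≤ A := by nlinarith
  have of_le_sub : ∀ m, 1 ≤ m → T m ≤ C - A → T m ≤ C * m - A * m ^ p := fun m hm h => by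
    nlinarith [rpow_le_self_of_one_le hm hp.le]
  refine forall_one_le_of_halving_step fun m hm ih => ?_
  rcases lt_or_ge m m₀ with hlt | hge
  · exact of_le_sub m hm ((hK m ⟨by linarith, hlt⟩).trans hCK)
  have hg : 2 ≤ g m := hg₂ m hge
  rcases lt_or_ge m (g m) with hsmall | hlarge
  · have hsqrt : √m < G := by
      have hs : 0 < √m := sqrt_pos.mpr (by linarith)
      nlinarith [mul_self_sqrt (by linarith : (0 : ℝ) ≤ m), hgG m hge]
    have hmG : m < G ^ 2 := by
      nlinarith [mul_self_sqrt (by linarith : (0 : ℝ) ≤ m), sqrt_nonneg m]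
    have hgG2 : g m ≤ G ^ 2 := by nlinarith [hgG m hge, sqrt_nonneg m]
    have hT' : T (m / g m) ≤ K :=
      hK _ ⟨by positivity, ((div_lt_one (by linarith)).mpr hsmall).trans_le hm₀⟩
    refine of_le_sub m hm ?_
    calc T m ≤ α * m ^ p + g m * K := by nlinarith [hrec m hge, ha m hge]
      _ ≤ α * G ^ 2 + G ^ 2 * K := by
          gcongr; exact (rpow_le_self_of_one_le hm hp.le).trans hmG.le
      _ ≤ C - A := by linarith
  · have hg₀ : 0 < g m := by linarith
    have hT' := ih (m / g m) ((one_le_div hg₀).mpr hlarge)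
      (div_le_div_of_nonneg_left (by linarith) (by norm_num) hg)
    have hslack : A * 2 ^ (1 - p) ≤ A * g m ^ (1 - p) := by gcongr
    calc T m ≤ α * m ^ p + g m * (C * (m / g m) - A * (m / g m) ^ p) := by
          nlinarith [hrec m hge, ha m hge]
      _ = α * m ^ p + C * m - A * g m ^ (1 - p) * m ^ p := by
          have hscale := mul_div_rpow_eq p hg₀ (by linarith : (0 : ℝ) ≤ m)
          have hlin : g m * (m / g m) = m := mul_div_cancel₀ m hg₀.ne'
          linear_combination C * hlin - A * hscale
      _ ≤ C * m - A * m ^ p := by nlinarith [rpow_nonneg (by linarith : (0 : ℝ) ≤ m) p]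

theorem exists_le_mul_of_le_add_mul (hp : p < 1) (hm₀ : 1 ≤ m₀) (hK₀ : 0 ≤ K)
    (hα : 0 ≤ α) (hK : ∀ m ∈ Ico 0 m₀, T m ≤ K)
    (hg₂ : ∀ m, m₀ ≤ m → 2 ≤ g m) (hgG : ∀ m, m₀ ≤ m → g m ≤ G * √m)
    (ha : ∀ m, m₀ ≤ m → a m ≤ α * m ^ p)
    (hrec : ∀ m, m₀ ≤ m → T m ≤ a m + g m * T (m / g m)) :
    ∃ C, 0 < C ∧ ∀ m, 1 ≤ m → T m ≤ C * m := by
  have hδ : 0 < (2 : ℝ) ^ (1 - p) - 1 := by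
    linarith [one_lt_rpow (by norm_num : (1 : ℝ) < 2) (by linarith : 0 < 1 - p)]
  set A := α / (2 ^ (1 - p) - 1)
  have hA₀ : 0 ≤ A := by positivity
  set C := A + K + G ^ 2 * (α + K) + 1
  have hbound := le_mul_sub_rpow_of_le_add_mul (A := A) (C := C) hp hm₀ hK₀ hα hK hg₂ hgG ha
    hrec (by rw [div_mul_cancel₀ _ hδ.ne']) (by nlinarith [sq_nonneg G]) (by linarith)
  refine ⟨C, by positivity, fun m hm => (hbound m hm).trans ?_⟩
  linarith [mul_nonneg hA₀ (rpow_nonneg (by linarith : (0 : ℝ) ≤ m) p)]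

end Recurrence

theorem gsat_recurrence_linear_general
    (f : ℝ → ℝ) (M₀ Mstar : ℝ) (hMstar : 1 ≤ Mstar)
    (hf_ge_one : ∀ m : ℝ, 1 ≤ m → 1 ≤ f m)
    (hf_sqrt : ∀ m : ℝ, M₀ ≤ m → f m ≤ Real.sqrt m)
    (hf_init : ∀ m ∈ Set.Icc (1 : ℝ) M₀, f m ≤ Mstar)
    (c : ℝ) (hc : 0 < c)
    (T : ℝ → ℝ)
    (hT_bdd : ∃ K : ℝ, ∀ m ∈ Set.Ico (0 : ℝ) 8, T m ≤ K)
    (hrec : ∀ m : ℝ, 8 ≤ m →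
      T m ≤ c * (Real.log m / Real.log 2) * f m + (f m + 1) * T (m / (f m + 1))) :
    ∃ C : ℝ, 0 < C ∧ ∀ m : ℝ, 1 ≤ m → T m ≤ C * m := by
  obtain ⟨K, hK⟩ := hT_bdd
  have hf : ∀ m, 1 ≤ m → f m ≤ Mstar * √m := fun m hm =>
    le_mul_sqrt_of_sqrt_bounded hMstar hf_sqrt hf_init hm
  exact exists_le_mul_of_le_add_mul (p := 3 / 4) (K := max K 0) (G := 2 * Mstar)
    (by norm_num) (by norm_num) (le_max_right _ _) (by positivity)
    (fun m hm => (hK m hm).trans (le_max_left _ _))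
    (fun m hm => by linarith [hf_ge_one m (by linarith)])
    (fun m hm => by nlinarith [hf m (by linarith), one_le_sqrt.mpr (by linarith : (1 : ℝ) ≤ m)])
    (fun m hm => mul_log_div_log_two_mul_le hc.le (by linarith) (by linarith) (hf m (by linarith)))
    hrec

/-- GSAT construction-time recurrence: if `f` is sqrt-bounded and `T` satisfies
`T m ≤ c · log₂ m · f m + (f m + 1) · T (m / (f m + 1))` for `m ≥ 8`,
then `T m = O(m)`. -/
theorem gsat_recurrence_linear
    (f : ℝ → ℝ) (M₀ Mstar : ℝ) (hM₀ : 1 ≤ M₀) (hMstar : 1 ≤ Mstar)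
    (hf_ge_one : ∀ m : ℝ, 1 ≤ m → 1 ≤ f m)
    (hf_sqrt : ∀ m : ℝ, M₀ ≤ m → f m ≤ Real.sqrt m)
    (hf_init : ∀ m ∈ Set.Icc (1 : ℝ) M₀, f m ≤ Mstar)
    (c : ℝ) (hc : 0 < c)
    (T : ℝ → ℝ) (hT_nonneg : ∀ m, 0 ≤ T m)
    (hT_bdd : ∃ K : ℝ, ∀ m ∈ Set.Ico (0 : ℝ) 8, T m ≤ K)
    (hrec : ∀ m : ℝ, 8 ≤ m →
      T m ≤ c * (Real.log m / Real.log 2) * f m + (f m + 1) * T (m / (f m + 1))) :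
    ∃ C : ℝ, 0 < C ∧ ∀ m : ℝ, 1 ≤ m → T m ≤ C * m :=
  gsat_recurrence_linear_general f M₀ Mstar hMstar hf_ge_one hf_sqrt hf_init c hc T hT_bdd hrec
end

section
/- For every natural number r ≥ 2, the real sum ∑_{i=1}^{r−1} 2^i / i is at most 3 · 2^(r−1) / (r−1). -/
/-! Induction on `n = r - 1`: adding `2^(n+1)/(n+1)` to the bound `3 · 2^n/n` stays below
`3 · 2^(n+1)/(n+1)` once `n ≥ 3`, because `3/n + 2/(n+1) ≤ 6/(n+1)` amounts to `3 ≤ n`;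
the cases `n < 3` are checked by computation. -/

theorem three_div_add_two_div_add_one_le {x : ℝ} (hx : 3 ≤ x) :
    3 / x + 2 / (x + 1) ≤ 6 / (x + 1) := by
  rw [div_add_div _ _ (by positivity) (by positivity), div_le_div_iff₀ (by positivity) (by positivity)]
  nlinarith

theorem sum_Icc_two_pow_div_le {n : ℕ} (hn : 1 ≤ n) :
    ∑ i ∈ Finset.Icc 1 n, (2 : ℝ) ^ i / i ≤ 3 * 2 ^ n / n := by
  induction n, hn using Nat.le_induction with
  | base => norm_num
  | succ n hn ih =>
    rw [Finset.sum_Icc_succ_top (by omega)]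
    obtain hn3 | hn3 := lt_or_ge n 3
    · interval_cases n <;> norm_num [Finset.sum_Icc_succ_top]
    calc _ ≤ 3 * 2 ^ n / n + 2 ^ (n + 1) / (n + 1 : ℝ) := by push_cast; gcongr
      _ = 2 ^ n * (3 / n + 2 / (n + 1)) := by ring
      _ ≤ 2 ^ n * (6 / (n + 1)) := by
        gcongr; exact three_div_add_two_div_add_one_le (by exact_mod_cast hn3)
      _ = 3 * 2 ^ (n + 1) / ↑(n + 1) := by push_cast; ring

/-- For `r ≥ 2`, `∑_{i=1}^{r-1} 2^i / i ≤ 3 · 2^(r-1) / (r-1)`. -/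
theorem sum_two_pow_div_le (r : ℕ) (hr : 2 ≤ r) :
    ∑ i ∈ Finset.Icc 1 (r - 1), (2 : ℝ) ^ i / (i : ℝ) ≤
      3 * (2 : ℝ) ^ (r - 1) / ((r : ℝ) - 1) := by
  have hcast : ((r - 1 : ℕ) : ℝ) = (r : ℝ) - 1 := by rw [Nat.cast_sub (by omega), Nat.cast_one]
  rw [← hcast]
  exact sum_Icc_two_pow_div_le (by omega)
end

section
/- Let d : ℝ → ℝ be a nonnegative nondecreasing function and d₀ ≥ 0 a constant such that d(m) ≤ d₀ for all m ∈ [1, 16] and d(m) ≤ 1 + d(m / (log m / log 2)) for all m > 16. Then there exists a constant C > 0 such that d(m) ≤ C · log m / log (log m) for all m ≥ 16. -/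
/-! Put `f x = log x / log log x`. One step of the recurrence replaces `m` by `m' = m / log₂ m`,
so `log m' = log m - log log m + O(1)`; since `log` is concave this also gives
`log log m' ≥ log log m - O(log log m / log m)`, and together `f m' + 1/2 ≤ f m` once `m` is large.
As `m' ≤ m / 2`, after finitely many steps `m` drops below a fixed threshold `M`, whence
`d m ≤ d M + 2 f m`, and `f ≥ 1` absorbs the constant. -/

open Real

theorem forall_le_of_halving {P : ℝ → Prop} {a M : ℝ} (hM : 0 < M)
    (base : ∀ m, a ≤ m → m ≤ M → P m)
    (step : ∀ m, M < m → ∃ m', a ≤ m' ∧ m' ≤ m / 2 ∧ (P m' → P m)) :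
    ∀ m, a ≤ m → P m := by
  suffices h : ∀ n : ℕ, ∀ m, a ≤ m → m ≤ M * 2 ^ n → P m by
    intro m ha
    obtain ⟨n, hn⟩ := pow_unbounded_of_one_lt (m / M) one_lt_two
    exact h n m ha ((div_lt_iff₀' hM).mp hn).le
  intro n
  induction n with
  | zero => simpa using base
  | succ n ih =>
    intro m ha hm
    rcases le_or_gt m M with hmM | hMm
    · exact base m ha hmM
    · obtain ⟨m', ha', hm', hP⟩ := step m hMm
      exact hP (ih m' ha' (by rw [pow_succ] at hm; linarith))

theorem two_mul_add_one_le_exp {x : ℝ} (hx : 3 ≤ x) : 2 * (x + 1) ≤ exp x := by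
  nlinarith [quadratic_le_exp_of_nonneg (by linarith : (0 : ℝ) ≤ x)]

theorem neg_one_le_log_log_two : -1 ≤ log (log 2) := by
  have h := one_sub_inv_le_log_of_pos (by positivity : 0 < log 2)
  have hinv : (log 2)⁻¹ ≤ 2 := by
    rw [inv_le_comm₀ (by positivity) (by norm_num)]
    linarith [log_two_gt_d9]
  linarith

theorem log_log_two_nonpos : log (log 2) ≤ 0 :=
  log_nonpos (log_nonneg one_le_two) (by linarith [log_two_lt_d9])

theorem one_le_log_div_log_log {m : ℝ} (hm : exp 1 < m) : 1 ≤ log m / log (log m) := by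
  have h1 : 1 < log m := (lt_log_iff_exp_lt (by linarith [exp_pos 1])).mpr hm
  rw [le_div_iff₀ (log_pos h1), one_mul]
  linarith [log_le_sub_one_of_pos (by linarith : 0 < log m)]

theorem div_logb_two_le_half {m : ℝ} (hm : 4 ≤ m) : m / logb 2 m ≤ m / 2 := by
  have h : 2 ≤ logb 2 m := by
    rw [le_logb_iff_rpow_le one_lt_two (by linarith)]
    norm_num [hm]
  exact div_le_div_of_nonneg_left (by linarith) two_pos h

theorem log_div_logb_two {m : ℝ} (hm : 1 < m) :
    log (m / logb 2 m) = log m - log (log m) + log (log 2) := by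
  have hlog : 0 < log m := log_pos hm
  rw [logb, div_div_eq_mul_div, log_div (by positivity) hlog.ne',
    log_mul (by positivity) (log_pos one_lt_two).ne']
  ring

theorem div_log_add_half_le {t s : ℝ} (ht : exp 5 ≤ t)
    (hs₁ : t - log t - 1 ≤ s) (hs₂ : s ≤ t - log t) :
    s / log s + 1 / 2 ≤ t / log t := by
  set L := log t with hL_def
  have ht0 : 0 < t := lt_of_lt_of_le (exp_pos 5) ht
  have hL : 5 ≤ L := by simpa using log_le_log (exp_pos 5) ht
  have htL : 2 * (L + 1) ≤ t := by
    simpa [hL_def, exp_log ht0] using two_mul_add_one_le_exp (by linarith : 3 ≤ L)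
  have hs0 : 0 < s := by linarith
  have hls : log s ≤ L := log_le_log hs0 (by linarith)
  -- concavity of `log`: `log t - log s = log (t / s) ≤ t / s - 1`
  have hconc : s * (L - log s) ≤ t - s := by
    have h := log_le_sub_one_of_pos (div_pos ht0 hs0)
    rw [log_div ht0.ne' hs0.ne', div_sub_one hs0.ne', le_div_iff₀ hs0] at h
    linarith
  have hgap : t * (L - log s) ≤ 2 * (L + 1) := by
    nlinarith [mul_le_mul_of_nonneg_right (by linarith : t ≤ 2 * s) (sub_nonneg.mpr hls)]
  have hlogs : 0 < log s := by nlinarith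
  rw [← le_sub_iff_add_le, div_le_iff₀ hlogs, div_sub' (by linarith), div_mul_eq_mul_div,
    le_div_iff₀ (by linarith)]
  nlinarith [mul_le_mul_of_nonneg_left hls (by linarith : (0 : ℝ) ≤ L)]

theorem salt_step {m : ℝ} (hm : exp (exp 5) ≤ m) :
    16 ≤ m / logb 2 m ∧
      log (m / logb 2 m) / log (log (m / logb 2 m)) + 1 / 2 ≤ log m / log (log m) := by
  have hm1 : 1 < m := lt_of_lt_of_le (one_lt_exp_iff.mpr (exp_pos 5)) hm
  have ht : exp 5 ≤ log m := by simpa using log_le_log (exp_pos _) hm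
  have hs := log_div_logb_two hm1
  have hs₁ : log m - log (log m) - 1 ≤ log (m / logb 2 m) := by
    linarith [neg_one_le_log_log_two]
  refine ⟨?_, div_log_add_half_le ht hs₁ (by linarith [log_log_two_nonpos])⟩
  have hL : 5 ≤ log (log m) := by simpa using log_le_log (exp_pos 5) ht
  have htL : 2 * (log (log m) + 1) ≤ log m := by
    simpa [exp_log (lt_of_lt_of_le (exp_pos 5) ht)] using
      two_mul_add_one_le_exp (by linarith : 3 ≤ log (log m))
  have hlog16 : log 16 < 4 := by
    rw [show (16 : ℝ) = 2 ^ 4 by norm_num, log_pow, Nat.cast_ofNat]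
    linarith [log_two_lt_d9]
  have hpos : 0 < m / logb 2 m := div_pos (by linarith) (logb_pos one_lt_two hm1)
  exact (log_le_log_iff (by norm_num) hpos).mp (by linarith)

theorem salt_depth_general (d : ℝ → ℝ) (hd_mono : Monotone d)
    (h_rec : ∀ m : ℝ, 16 < m → d m ≤ 1 + d (m / (Real.log m / Real.log 2))) :
    ∃ C : ℝ, 0 < C ∧ ∀ m : ℝ, 16 ≤ m →
      d m ≤ C * Real.log m / Real.log (Real.log m) := by
  set M := exp (exp 5)
  have hM : 16 < M := by
    have h5 := quadratic_le_exp_of_nonneg (by norm_num : (0 : ℝ) ≤ 5)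
    linarith [add_one_le_exp (exp 5)]
  have he16 : ∀ m : ℝ, 16 ≤ m → exp 1 < m := fun m hm => by
    linarith [exp_one_lt_d9]
  have bound : ∀ m, 16 ≤ m → d m ≤ d M + 2 * (log m / log (log m)) := by
    refine forall_le_of_halving (by positivity) (fun m hm hmM => ?_) (fun m hMm => ?_)
    · linarith [hd_mono hmM, one_le_log_div_log_log (he16 m hm)]
    · obtain ⟨h16, hstep⟩ := salt_step hMm.le
      refine ⟨m / logb 2 m, h16, div_logb_two_le_half (by linarith), fun ih => ?_⟩
      have hrec : d m ≤ 1 + d (m / logb 2 m) := h_rec m (by linarith)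
      linarith
  refine ⟨max (d M) 0 + 2, by positivity, fun m hm => ?_⟩
  have hf := one_le_log_div_log_log (he16 m hm)
  rw [mul_div_assoc]
  nlinarith [bound m hm, le_max_left (d M) 0,
    mul_le_mul_of_nonneg_left hf (le_max_right (d M) 0)]

/-- SALT depth recurrence: if `d m ≤ 1 + d (m / log₂ m)` for `m > 16`, then
`d m = O(log m / log log m)`. -/
theorem salt_depth (d : ℝ → ℝ) (hd_nonneg : ∀ m, 0 ≤ d m) (hd_mono : Monotone d)
    (d₀ : ℝ) (hd₀ : 0 ≤ d₀)
    (h_init : ∀ m ∈ Set.Icc (1 : ℝ) 16, d m ≤ d₀)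
    (h_rec : ∀ m : ℝ, 16 < m → d m ≤ 1 + d (m / (Real.log m / Real.log 2))) :
    ∃ C : ℝ, 0 < C ∧ ∀ m : ℝ, 16 ≤ m →
      d m ≤ C * Real.log m / Real.log (Real.log m) :=
  salt_depth_general d hd_mono h_rec
end

section
/- Let α < 1, c ≥ 0 and B ≥ 0 be real numbers, and let g : ℝ → ℝ be a nonnegative function such that g(m) ≤ B for all m ∈ [1, 16] and g(m) ≤ c · m^(α − 1) + g(√m) for all m > 16. Then there exists a constant C such that g(m) ≤ C for all m ≥ 1. -/
/-!
An application of the recurrence at an argument in `(a ^ 2 ^ j, a ^ 2 ^ (j + 1)]` costs at most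
`c * (a ^ β) ^ 2 ^ j` and passes to `√m`, one level lower; so from `m ≤ a ^ 2 ^ n` the argument
reaches `[1, a]` within `n` steps. Since `a ^ β < 1`, the doubly exponentially decaying total
cost is dominated by a convergent geometric series, uniformly in `n`.
-/

open Finset Real

lemma sum_range_pow_two_pow_le {r : ℝ} (hr₀ : 0 ≤ r) (hr₁ : r < 1) (n : ℕ) :
    ∑ k ∈ range n, r ^ 2 ^ k ≤ (1 - r)⁻¹ :=
  calc ∑ k ∈ range n, r ^ 2 ^ k
      ≤ ∑ k ∈ range n, r ^ k :=
        sum_le_sum fun _ _ => pow_le_pow_of_le_one hr₀ hr₁.le Nat.lt_two_pow_self.le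
    _ ≤ r ^ 0 / (1 - r) := by
        rw [range_eq_Ico]
        exact geom_sum_Ico_le_of_lt_one hr₀ hr₁
    _ = (1 - r)⁻¹ := by simp

lemma rpow_le_pow_of_pow_le {a m β : ℝ} (ha : 0 < a) (hβ : β ≤ 0) {k : ℕ} (h : a ^ k ≤ m) :
    m ^ β ≤ (a ^ β) ^ k := by
  rw [rpow_pow_comm ha.le]
  exact rpow_le_rpow_of_nonpos (by positivity) h hβ

lemma sqrt_le_pow_two_pow {a m : ℝ} (ha : 0 ≤ a) {n : ℕ} (h : m ≤ a ^ 2 ^ (n + 1)) :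
    √m ≤ a ^ 2 ^ n := by
  rwa [sqrt_le_left (by positivity), ← pow_mul, ← pow_succ]

section SqrtRecurrence

variable {g : ℝ → ℝ} {a β c B : ℝ}

theorem le_add_sum_of_sqrt_recurrence (ha : 1 ≤ a) (hβ : β ≤ 0) (hc : 0 ≤ c)
    (h_init : ∀ m ∈ Set.Icc 1 a, g m ≤ B)
    (h_rec : ∀ m, a < m → g m ≤ c * m ^ β + g √m) (n : ℕ) :
    ∀ m, 1 ≤ m → m ≤ a ^ 2 ^ n → g m ≤ B + c * ∑ k ∈ range n, (a ^ β) ^ 2 ^ k := by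
  induction n with
  | zero =>
    intro m h1 hm
    simpa using h_init m ⟨h1, by simpa using hm⟩
  | succ n ih =>
    intro m h1 hm
    set S := ∑ k ∈ range n, (a ^ β) ^ 2 ^ k
    rw [sum_range_succ]
    rcases le_or_gt m (a ^ 2 ^ n) with hsmall | hlarge
    · have hterm : 0 ≤ c * (a ^ β) ^ 2 ^ n := by positivity
      linarith [ih m h1 hsmall]
    · have ha_lt : a < m := (le_self_pow₀ ha (by positivity)).trans_lt hlarge
      calc g m ≤ c * m ^ β + g √m := h_rec m ha_lt
        _ ≤ c * (a ^ β) ^ 2 ^ n + (B + c * S) := by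
          gcongr
          · exact rpow_le_pow_of_pow_le (by linarith) hβ hlarge.le
          · exact ih √m (one_le_sqrt.2 h1) (sqrt_le_pow_two_pow (by linarith) hm)
        _ = B + c * (S + (a ^ β) ^ 2 ^ n) := by ring

theorem exists_bound_of_sqrt_recurrence (ha : 1 < a) (hβ : β < 0) (hc : 0 ≤ c)
    (h_init : ∀ m ∈ Set.Icc 1 a, g m ≤ B)
    (h_rec : ∀ m, a < m → g m ≤ c * m ^ β + g √m) :
    ∃ C, ∀ m, 1 ≤ m → g m ≤ C := by
  refine ⟨B + c * (1 - a ^ β)⁻¹, fun m hm => ?_⟩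
  obtain ⟨n, hn⟩ := pow_unbounded_of_one_lt m ha
  have hm_le : m ≤ a ^ 2 ^ n := hn.le.trans (pow_le_pow_right₀ ha.le Nat.lt_two_pow_self.le)
  calc g m ≤ B + c * ∑ k ∈ range n, (a ^ β) ^ 2 ^ k :=
        le_add_sum_of_sqrt_recurrence ha.le hβ.le hc h_init h_rec n m hm hm_le
    _ ≤ B + c * (1 - a ^ β)⁻¹ := by
        gcongr
        exact sum_range_pow_two_pow_le (by positivity) (rpow_lt_one_of_one_lt_of_neg ha hβ) n

end SqrtRecurrence

theorem id_array_cost_bounded_general (α c B : ℝ) (hα : α < 1) (hc : 0 ≤ c)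
    (g : ℝ → ℝ)
    (h_init : ∀ m ∈ Set.Icc (1 : ℝ) 16, g m ≤ B)
    (h_rec : ∀ m : ℝ, 16 < m → g m ≤ c * m ^ (α - 1) + g (Real.sqrt m)) :
    ∃ C : ℝ, ∀ m : ℝ, 1 ≤ m → g m ≤ C :=
  exists_bound_of_sqrt_recurrence (by norm_num) (by linarith) hc h_init h_rec

/-- Normalized ID-array construction cost: if `g m ≤ c·m^(α−1) + g(√m)` for `m > 16`
and `g` is bounded on `[1,16]`, then `g` is bounded on `[1,∞)`. -/
theorem id_array_cost_bounded (α c B : ℝ) (hα : α < 1) (hc : 0 ≤ c) (hB : 0 ≤ B)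
    (g : ℝ → ℝ) (hg_nonneg : ∀ m, 0 ≤ g m)
    (h_init : ∀ m ∈ Set.Icc (1 : ℝ) 16, g m ≤ B)
    (h_rec : ∀ m : ℝ, 16 < m → g m ≤ c * m ^ (α - 1) + g (Real.sqrt m)) :
    ∃ C : ℝ, ∀ m : ℝ, 1 ≤ m → g m ≤ C :=
  id_array_cost_bounded_general α c B hα hc g h_init h_rec
end
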